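/- For every simple resource term s, the set ↓s = {t ∈ Δ : t ≤ s} is finite. -/

import Mathlib

/-! A reduction step never increases the size of a term: in a β-step `⟨λx.t⟩S →₁ t⟨S/x⟩` each
element of `S` replaces one occurrence of `x`, so every summand has size at most `|t| + |S|`.
Nor does it introduce a variable name, free or bound, that did not already occur. Hence every
`t ≤ s` has size at most `|s|` and uses only the finitely many names occurring in `s`, and there
are only finitely many such terms. -/

inductive RT : Type
  | var : ℕ → RT
  | lam : ℕ → RT → RT
  | app : RT → List RT → RT

noncomputable instance : DecidableEq RT := Classical.decEq _

namespace Resource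

mutual
def size : RT → ℕ
  | .var _ => 1
  | .lam _ s => 1 + size s
  | .app s S => 1 + size s + sizeP S
def sizeP : List RT → ℕ
  | [] => 0
  | t :: T => size t + sizeP T
end

mutual
def fv : RT → Finset ℕ
  | .var x => {x}
  | .lam x s => (fv s).erase x
  | .app s S => fv s ∪ fvP S
def fvP : List RT → Finset ℕ
  | [] => ∅
  | t :: T => fv t ∪ fvP T
end

mutual
def fc : RT → ℕ → ℕ
  | .var y, x => if y = x then 1 else 0
  | .lam y s, x => if y = x then 0 else fc s x
  | .app s S, x => fc s x + fcP S x
def fcP : List RT → ℕ → ℕ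
  | [], _ => 0
  | t :: T, x => fc t x + fcP T x
end

mutual
def subst : RT → ℕ → RT → RT
  | .var y, x, t => if y = x then t else .var y
  | .lam y s, x, t => if y = x then .lam y s else .lam y (subst s x t)
  | .app s S, x, t => .app (subst s x t) (substP S x t)
def substP : List RT → ℕ → RT → List RT
  | [], _, _ => []
  | u :: T, x, t => subst u x t :: substP T x t
end

def splits : List RT → List (List RT × List RT)
  | [] => [([], [])]
  | a :: l => (splits l).flatMap fun p => [(a :: p.1, p.2), (p.1, a :: p.2)]

mutual
def dsubst : RT → ℕ → List RT → Multiset RT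
  | .var y, x, S =>
      if y = x then (match S with | [t] => {t} | _ => 0)
      else if S.isEmpty then {RT.var y} else 0
  | .lam y s, x, S =>
      if y = x then (if S.isEmpty then {RT.lam y s} else 0)
      else (dsubst s x S).map (RT.lam y)
  | .app s T, x, S =>
      ((splits S).map fun p =>
        (dsubst s x p.1).bind fun s' =>
          (dsubstP T x p.2).map fun T' => RT.app s' T').sum
def dsubstP : List RT → ℕ → List RT → Multiset (List RT)
  | [], _, S => if S.isEmpty then {([] : List RT)} else 0
  | t :: T, x, S =>
      ((splits S).map fun p =>
        (dsubst t x p.1).bind fun t' =>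
          (dsubstP T x p.2).map fun T' => t' :: T').sum
end

mutual
inductive Red1 : RT → Multiset RT → Prop
  | beta (x : ℕ) (s : RT) (S : List RT) : Red1 (.app (.lam x s) S) (dsubst s x S)
  | lam (x : ℕ) {s : RT} {a : Multiset RT} : Red1 s a → Red1 (.lam x s) (a.map (RT.lam x))
  | appL {s : RT} {a : Multiset RT} (S : List RT) :
      Red1 s a → Red1 (.app s S) (a.map fun u => RT.app u S)
  | appR (s : RT) {S : List RT} {A : Multiset (List RT)} :
      Red1P S A → Red1 (.app s S) (A.map fun T => RT.app s T)
inductive Red1P : List RT → Multiset (List RT) → Prop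
  | head {t : RT} {b : Multiset RT} (T : List RT) :
      Red1 t b → Red1P (t :: T) (b.map fun u => u :: T)
  | tail (t : RT) {T : List RT} {B : Multiset (List RT)} :
      Red1P T B → Red1P (t :: T) (B.map fun T' => t :: T')
end

def NLift {α β : Type*} (ρ : α → Multiset β → Prop) (a : Multiset α) (b : Multiset β) : Prop :=
  ∃ l : List (α × Multiset β), (∀ p ∈ l, ρ p.1 p.2) ∧
    a = (l.map Prod.fst : List α) ∧ b = (l.map Prod.snd).sum

def Red1R (s : RT) (b : Multiset RT) : Prop := b = {s} ∨ Red1 s b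

def Red : Multiset RT → Multiset RT → Prop := Relation.TransGen (NLift Red1R)

def rle (t s : RT) : Prop := ∃ a, Red {s} a ∧ t ∈ a

def above (s : RT) : Set RT := {t | rle s t}

def Red1RP (S : List RT) (B : Multiset (List RT)) : Prop := B = {S} ∨ Red1P S B

def RedP : Multiset (List RT) → Multiset (List RT) → Prop := Relation.TransGen (NLift Red1RP)

def plep (T S : List RT) : Prop := ∃ A, RedP {S} A ∧ T ∈ A





def orth {I : Type*} (F : Set (Set I)) : Set (Set I) := {e' | ∀ e ∈ F, (e ∩ e').Finite}

structure FinSpace (I : Type*) where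
  F : Set (Set I)
  biorth : orth (orth F) ⊆ F

lemma subset_biorth {I : Type*} (G : Set (Set I)) : G ⊆ orth (orth G) := by
  intro e he g hg
  have := hg e he
  rwa [Set.inter_comm] at this

lemma orth_anti {I : Type*} {G H : Set (Set I)} (h : G ⊆ H) : orth H ⊆ orth G :=
  fun g hg e he => hg e (h he)

def FinSpace.ofOrth {I : Type*} (G : Set (Set I)) : FinSpace I :=
  ⟨orth G, orth_anti (subset_biorth G)⟩

lemma FinSpace.empty_mem {I : Type*} (X : FinSpace I) : ∅ ∈ X.F :=
  X.biorth (fun g _ => by simp)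

lemma FinSpace.mem_of_subset {I : Type*} (X : FinSpace I) {e f : Set I}
    (he : e ∈ X.F) (h : f ⊆ e) : f ∈ X.F := by
  refine X.biorth (fun g hg => ?_)
  exact ((hg e he).subset (fun x hx => ⟨h hx.2, hx.1⟩))

lemma FinSpace.union_mem {I : Type*} (X : FinSpace I) {e f : Set I}
    (he : e ∈ X.F) (hf : f ∈ X.F) : e ∪ f ∈ X.F := by
  refine X.biorth (fun g hg => ?_)
  have h1 := hg e he
  have h2 := hg f hf
  rw [Set.inter_comm] at h1 h2
  rw [Set.inter_union_distrib_left]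
  exact h1.union h2

def fsSub (k : Type*) [Field k] {I : Type*} (X : FinSpace I) : Submodule k (I → k) where
  carrier := {a | {s | a s ≠ 0} ∈ X.F}
  add_mem' := by
    intro a b ha hb
    refine X.mem_of_subset (X.union_mem ha hb) ?_
    intro s hs
    by_contra h
    simp only [Set.mem_union, Set.mem_setOf_eq, not_or, not_not] at h
    exact hs (by simp [Pi.add_apply, h.1, h.2])
  zero_mem' := by
    refine X.mem_of_subset X.empty_mem ?_
    intro s hs
    simp at hs
  smul_mem' := by
    intro c a ha
    refine X.mem_of_subset ha ?_
    intro s hs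
    by_contra h
    simp only [Set.mem_setOf_eq, not_not] at h
    exact hs (by simp [Pi.smul_apply, h])

def fsTop (k : Type*) [Field k] {I : Type*} (X : FinSpace I) :
    TopologicalSpace (fsSub k X) where
  IsOpen U := ∀ a ∈ U, ∃ e' ∈ orth X.F, ∀ b : fsSub k X, (∀ s ∈ e', b.1 s = a.1 s) → b ∈ U
  isOpen_univ := by
    intro a _
    exact ⟨∅, fun e _ => by simp, fun b _ => trivial⟩
  isOpen_inter := by
    rintro U V hU hV a ⟨haU, haV⟩
    obtain ⟨e₁, he₁, h₁⟩ := hU a haU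
    obtain ⟨e₂, he₂, h₂⟩ := hV a haV
    refine ⟨e₁ ∪ e₂, fun e he => ?_, fun b hb => ?_⟩
    · rw [Set.inter_union_distrib_left]
      exact (he₁ e he).union (he₂ e he)
    · exact ⟨h₁ b (fun s hs => hb s (Or.inl hs)), h₂ b (fun s hs => hb s (Or.inr hs))⟩
  isOpen_sUnion := by
    rintro 𝒮 h a ⟨U, hU, haU⟩
    obtain ⟨e', he', hb⟩ := h U hU a haU
    exact ⟨e', he', fun b hbs => ⟨U, hU, hb b hbs⟩⟩



def Sfin : Set (Set RT) := orth (Set.range above)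

def SfinSpace : FinSpace RT := FinSpace.ofOrth (Set.range above)

def SS : Set (Set RT) := {e' | ∀ ξ : Finset ℕ, {s ∈ e' | fv s ⊆ ξ}.Finite}

def Sfv : Set (Set RT) := orth (Set.range above ∪ SS)

def bang (e : Set RT) : Set (List RT) := {S | ∀ t ∈ S, t ∈ e}

def appSet (g : Set RT) (E : Set (List RT)) : Set RT :=
  {u | ∃ t ∈ g, ∃ S ∈ E, u = RT.app t S}

def lamSet (x : ℕ) (g : Set RT) : Set RT := {u | ∃ s ∈ g, u = RT.lam x s}

def appMany (g : Set RT) (Es : List (Set (List RT))) : Set RT := Es.foldl appSet g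

def dsubstSet (g : Set RT) (x : ℕ) (E : Set (List RT)) : Set RT :=
  {t | ∃ s ∈ g, ∃ S ∈ E, t ∈ dsubst s x S}

def IsDFS (W : Set RT) (F : Set (Set RT)) : Prop :=
  (∀ e ∈ F, e ⊆ W) ∧ ∀ e : Set RT, e ⊆ W → e ∈ orth (orth F) → e ∈ F

def SaturatedP (W : Set RT) (F : Set (Set RT)) : Prop :=
  (∀ (x : ℕ) (es : List (Set RT)), (∀ e ∈ es, e ∈ Sfv) →
      appMany {RT.var x} (es.map bang) ∈ F) ∧
  F ⊆ Sfv ∧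
  (∀ (x : ℕ) (g e : Set RT) (es : List (Set RT)), g ∈ Sfv → e ∈ Sfv →
      (∀ e' ∈ es, e' ∈ Sfv) →
      appMany (dsubstSet g x (bang e)) (es.map bang) ∈ F →
      appMany (appSet (lamSet x g) (bang e)) (es.map bang) ∈ F)

abbrev FP := Set RT × Set (Set RT)

def SatFP (X : FP) : Prop := IsDFS X.1 X.2 ∧ SaturatedP X.1 X.2

def implWeb (FX FY : Set (Set RT)) : Set RT :=
  {t | ∀ e ∈ FX, appSet {t} (bang e) ∈ FY}

def implF (FX FY : Set (Set RT)) : Set (Set RT) :=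
  {g | g ⊆ implWeb FX FY ∧ ∀ e ∈ FX, appSet g (bang e) ∈ FY}

def implFP (X Y : FP) : FP := (implWeb X.2 Y.2, implF X.2 Y.2)

def preimpl (e : Set RT) (f' : Set RT) : Set RT :=
  {t | (appSet {t} (bang e) ∩ f').Nonempty}

def pdsubstSet (f : Set RT) (l : List (ℕ × Set (List RT))) : Set RT :=
  l.foldl (fun g p => dsubstSet g p.1 p.2) f

inductive ALam (k : Type) : Type
  | var : ℕ → ALam k
  | lam : ℕ → ALam k → ALam k
  | app : ALam k → List (k × ALam k) → ALam k

variable {k : Type} [Field k]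

mutual
def taylor : ALam k → RT → k
  | .var x, .var y => if x = y then 1 else 0
  | .var _, _ => 0
  | .lam x M, .lam y s => if x = y then taylor M s else 0
  | .lam _ _, _ => 0
  | .app M Q, .app t T =>
      taylor M t * ((Nat.factorial T.length : ℕ) : k)⁻¹ * (T.map fun u => taylorQ Q u).prod
  | .app _ _, _ => 0
def taylorQ : List (k × ALam k) → RT → k
  | [], _ => 0
  | (α, N) :: Q, u => α * taylor N u + taylorQ Q u
end

mutual
inductive InShape : ALam k → RT → Prop
  | var (x : ℕ) : InShape (.var x) (.var x)
  | lam (x : ℕ) {M : ALam k} {s : RT} : InShape M s → InShape (.lam x M) (.lam x s)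
  | app {M : ALam k} {Q : List (k × ALam k)} {s : RT} {T : List RT} :
      InShape M s → (∀ u ∈ T, InShapeQ Q u) →
      InShape (.app M Q) (.app s T)
inductive InShapeQ : List (k × ALam k) → RT → Prop
  | head {α : k} {N : ALam k} (Q : List (k × ALam k)) {u : RT} :
      InShape N u → InShapeQ ((α, N) :: Q) u
  | tail (p : k × ALam k) {Q : List (k × ALam k)} {u : RT} :
      InShapeQ Q u → InShapeQ (p :: Q) u
end

inductive Ty : Type
  | var : ℕ → Ty
  | arrow : Ty → Ty → Ty
  | all : ℕ → Ty → Ty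

def tyFV : Ty → Finset ℕ
  | .var φ => {φ}
  | .arrow A B => tyFV A ∪ tyFV B
  | .all φ A => (tyFV A).erase φ

def substTy : Ty → ℕ → Ty → Ty
  | .var ψ, φ, B => if ψ = φ then B else .var ψ
  | .arrow A C, φ, B => .arrow (substTy A φ B) (substTy C φ B)
  | .all ψ A, φ, B => if ψ = φ then .all ψ A else .all ψ (substTy A φ B)

inductive HasTy : List (ℕ × Ty) → ALam k → Ty → Prop
  | var (Γ : List (ℕ × Ty)) (x : ℕ) (A : Ty) :
      List.lookup x Γ = some A → HasTy Γ (.var x) A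
  | abs {Γ : List (ℕ × Ty)} {x : ℕ} {M : ALam k} {A B : Ty} :
      HasTy ((x, A) :: Γ) M B → HasTy Γ (.lam x M) (.arrow A B)
  | app {Γ : List (ℕ × Ty)} {M : ALam k} {Q : List (k × ALam k)} {A B : Ty} :
      HasTy Γ M (.arrow A B) → (∀ p ∈ Q, HasTy Γ p.2 A) → HasTy Γ (.app M Q) B
  | inst {Γ : List (ℕ × Ty)} {M : ALam k} {φ : ℕ} {A : Ty} (B : Ty) :
      HasTy Γ M (.all φ A) → HasTy Γ M (substTy A φ B)
  | gen {Γ : List (ℕ × Ty)} {M : ALam k} {φ : ℕ} {A : Ty} :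
      HasTy Γ M A → (∀ p ∈ Γ, φ ∉ tyFV p.2) → HasTy Γ M (.all φ A)



def interp (I : ℕ → FP) : Ty → FP
  | .var φ => I φ
  | .arrow A B => implFP (interp I A) (interp I B)
  | .all φ A =>
      (⋂ (X : FP) (_ : SatFP X), (interp (Function.update I φ X) A).1,
       {e | (e ⊆ ⋂ (X : FP) (_ : SatFP X), (interp (Function.update I φ X) A).1) ∧
            ∀ X : FP, SatFP X → e ∈ (interp (Function.update I φ X) A).2})

theorem _root_.Multiset.mem_list_sum {α : Type*} {l : List (Multiset α)} {t : α} :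
    t ∈ l.sum ↔ ∃ m ∈ l, t ∈ m := by
  rw [← Multiset.sum_coe, ← Multiset.join, Multiset.mem_join]
  simp

/- Bound variable names are recorded as well: without them, terms of bounded size would not
form a finite set. -/
mutual
def vars : RT → Finset ℕ
  | .var x => {x}
  | .lam x s => insert x (vars s)
  | .app s S => vars s ∪ varsP S
def varsP : List RT → Finset ℕ
  | [] => ∅
  | t :: T => vars t ∪ varsP T
end

def weight (t : RT) : ℕ × Finset ℕ := (size t, vars t)

def weightP (T : List RT) : ℕ × Finset ℕ := (sizeP T, varsP T)

lemma size_pos (s : RT) : 0 < size s := by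
  cases s <;> simp [size]

lemma sizeP_add_of_mem_splits {S : List RT} {p : List RT × List RT} (h : p ∈ splits S) :
    sizeP p.1 + sizeP p.2 = sizeP S := by
  induction S generalizing p with
  | nil => simp_all [splits, sizeP]
  | cons a l ih =>
    simp only [splits, List.mem_flatMap, List.mem_cons, List.not_mem_nil, or_false] at h
    obtain ⟨q, hq, rfl | rfl⟩ := h <;> simp only [sizeP] <;> have := ih hq <;> omega

lemma varsP_union_subset_of_mem_splits {S : List RT} {p : List RT × List RT}
    (h : p ∈ splits S) : varsP p.1 ∪ varsP p.2 ⊆ varsP S := by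
  induction S generalizing p with
  | nil => simp_all [splits, varsP]
  | cons a l ih =>
    simp only [splits, List.mem_flatMap, List.mem_cons, List.not_mem_nil, or_false] at h
    obtain ⟨q, hq, rfl | rfl⟩ := h <;> have := ih hq <;> simp only [varsP] at this ⊢ <;> grind

lemma mem_sum_splits_iff {α β γ : Type*} {S : List RT} {f : List RT → Multiset α}
    {g : List RT → Multiset β} {c : α → β → γ} {u : γ} :
    u ∈ ((splits S).map fun p => (f p.1).bind fun a => (g p.2).map (c a)).sum ↔
      ∃ p ∈ splits S, ∃ a ∈ f p.1, ∃ b ∈ g p.2, c a b = u := by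
  simp [Multiset.mem_list_sum]

mutual
theorem bound_of_mem_dsubst : ∀ {s : RT} {x : ℕ} {S : List RT} {t : RT},
    t ∈ dsubst s x S → size t ≤ size s + sizeP S ∧ vars t ⊆ vars s ∪ varsP S
  | .var y, x, S, t, ht => by
    rcases S with _ | ⟨u, _ | ⟨v, S⟩⟩ <;>
      by_cases hyx : y = x <;> simp_all [dsubst, size, sizeP, vars, varsP]
  | .lam y s, x, S, t, ht => by
    by_cases hyx : y = x
    · rcases S with _ | ⟨u, S⟩ <;> simp_all [dsubst, vars]
    · simp only [dsubst, hyx, if_false, Multiset.mem_map] at ht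
      obtain ⟨t', ht', rfl⟩ := ht
      have ih := bound_of_mem_dsubst ht'
      simp only [size, vars]
      exact ⟨by omega, by grind⟩
  | .app s T, x, S, t, ht => by
    simp only [dsubst, mem_sum_splits_iff] at ht
    obtain ⟨p, hp, s', hs', T', hT', rfl⟩ := ht
    have ih₁ := bound_of_mem_dsubst hs'
    have ih₂ := bound_of_mem_dsubstP hT'
    have := sizeP_add_of_mem_splits hp
    have := varsP_union_subset_of_mem_splits hp
    simp only [size, vars]
    exact ⟨by omega, by grind⟩
theorem bound_of_mem_dsubstP : ∀ {T : List RT} {x : ℕ} {S : List RT} {T' : List RT},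
    T' ∈ dsubstP T x S → sizeP T' ≤ sizeP T + sizeP S ∧ varsP T' ⊆ varsP T ∪ varsP S
  | [], x, S, T', hT' => by
    rcases S with _ | ⟨u, S⟩ <;> simp_all [dsubstP]
  | t :: T, x, S, T', hT' => by
    simp only [dsubstP, mem_sum_splits_iff] at hT'
    obtain ⟨p, hp, t', ht', T'', hT'', rfl⟩ := hT'
    have ih₁ := bound_of_mem_dsubst ht'
    have ih₂ := bound_of_mem_dsubstP hT''
    have := sizeP_add_of_mem_splits hp
    have := varsP_union_subset_of_mem_splits hp
    simp only [sizeP, varsP]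
    exact ⟨by omega, by grind⟩
end

lemma weight_le_iff {s t : RT} : weight t ≤ weight s ↔ size t ≤ size s ∧ vars t ⊆ vars s :=
  Prod.mk_le_mk

lemma weightP_le_iff {S T : List RT} :
    weightP T ≤ weightP S ↔ sizeP T ≤ sizeP S ∧ varsP T ⊆ varsP S :=
  Prod.mk_le_mk

mutual
theorem Red1.weight_le : ∀ {s : RT} {a : Multiset RT}, Red1 s a → ∀ t ∈ a, weight t ≤ weight s
  | _, _, .beta x s S, t, ht => by
    have := bound_of_mem_dsubst ht
    simp only [weight_le_iff, size, vars]
    exact ⟨by omega, by grind⟩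
  | _, _, .lam x h, _, ht => by
    obtain ⟨u, hu, rfl⟩ := Multiset.mem_map.1 ht
    have := weight_le_iff.1 (h.weight_le u hu)
    simp only [weight_le_iff, size, vars]
    exact ⟨by omega, Finset.insert_subset_insert x this.2⟩
  | _, _, .appL S h, _, ht => by
    obtain ⟨u, hu, rfl⟩ := Multiset.mem_map.1 ht
    have := weight_le_iff.1 (h.weight_le u hu)
    simp only [weight_le_iff, size, vars]
    exact ⟨by omega, Finset.union_subset_union this.2 le_rfl⟩
  | _, _, .appR s h, _, ht => by
    obtain ⟨U, hU, rfl⟩ := Multiset.mem_map.1 ht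
    have := weightP_le_iff.1 (h.weightP_le U hU)
    simp only [weight_le_iff, size, vars]
    exact ⟨by omega, Finset.union_subset_union le_rfl this.2⟩
theorem Red1P.weightP_le :
    ∀ {S : List RT} {A : Multiset (List RT)}, Red1P S A → ∀ T ∈ A, weightP T ≤ weightP S
  | _, _, .head T h, _, hT => by
    obtain ⟨u, hu, rfl⟩ := Multiset.mem_map.1 hT
    have := weight_le_iff.1 (h.weight_le u hu)
    simp only [weightP_le_iff, sizeP, varsP]
    exact ⟨by omega, Finset.union_subset_union this.2 le_rfl⟩
  | _, _, .tail t h, _, hT => by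
    obtain ⟨U, hU, rfl⟩ := Multiset.mem_map.1 hT
    have := weightP_le_iff.1 (h.weightP_le U hU)
    simp only [weightP_le_iff, sizeP, varsP]
    exact ⟨by omega, Finset.union_subset_union le_rfl this.2⟩
end

lemma NLift.exists_of_mem {α β : Type*} {ρ : α → Multiset β → Prop} {a : Multiset α}
    {b : Multiset β} (h : NLift ρ a b) {t : β} (ht : t ∈ b) : ∃ s ∈ a, ∃ c, ρ s c ∧ t ∈ c := by
  obtain ⟨l, hl, rfl, rfl⟩ := h
  obtain ⟨_, hc, htc⟩ := Multiset.mem_list_sum.1 ht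
  obtain ⟨p, hp, rfl⟩ := List.mem_map.1 hc
  exact ⟨p.1, Multiset.mem_coe.2 (List.mem_map_of_mem hp), p.2, hl p hp, htc⟩

lemma Red.exists_weight_le {a b : Multiset RT} (h : Red a b) :
    ∀ t ∈ b, ∃ s ∈ a, weight t ≤ weight s := by
  have step : ∀ {a b}, NLift Red1R a b → ∀ t ∈ b, ∃ s ∈ a, weight t ≤ weight s := by
    intro a b h t ht
    obtain ⟨s, hs, c, hc | hc, htc⟩ := h.exists_of_mem ht
    · exact ⟨s, hs, by rw [hc, Multiset.mem_singleton] at htc; rw [htc]⟩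
    · exact ⟨s, hs, hc.weight_le t htc⟩
  induction h with
  | single h => exact step h
  | tail _ h ih =>
    intro t ht
    obtain ⟨u, hu, htu⟩ := step h t ht
    obtain ⟨s, hs, hus⟩ := ih u hu
    exact ⟨s, hs, htu.trans hus⟩

lemma finite_setOf_weight_le (ξ : Finset ℕ) (n : ℕ) :
    {t : RT | weight t ≤ (n, ξ)}.Finite ∧ {T : List RT | weightP T ≤ (n, ξ)}.Finite := by
  simp only [weight, weightP, Prod.mk_le_mk]
  induction n with
  | zero =>
    refine ⟨Set.finite_empty.subset fun t ht => ?_, (Set.finite_singleton []).subset fun T hT => ?_⟩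
    · have := size_pos t
      exact absurd ht.1 (by omega)
    · rcases T with _ | ⟨t, T⟩
      · rfl
      · have := size_pos t
        exact absurd hT.1 (by simp only [sizeP]; omega)
  | succ n ih =>
    obtain ⟨hterms, hlists⟩ := ih
    have hterms' : {t : RT | size t ≤ n + 1 ∧ vars t ⊆ ξ}.Finite := by
      refine (((ξ.finite_toSet.image RT.var).union (ξ.finite_toSet.image2 RT.lam hterms)).union
        (hterms.image2 RT.app hlists)).subset ?_
      rintro (x | ⟨x, s⟩ | ⟨s, S⟩) ⟨hsize, hvars⟩
      all_goals simp only [size, vars, Finset.insert_subset_iff, Finset.union_subset_iff,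
        Finset.singleton_subset_iff] at hsize hvars
      · exact Or.inl (Or.inl ⟨x, hvars, rfl⟩)
      · exact Or.inl (Or.inr ⟨x, hvars.1, s, ⟨by omega, hvars.2⟩, rfl⟩)
      · have := size_pos s
        exact Or.inr ⟨s, ⟨by omega, hvars.1⟩, S, ⟨by omega, hvars.2⟩, rfl⟩
    refine ⟨hterms', ((Set.finite_singleton []).union (hterms'.image2 List.cons hlists)).subset ?_⟩
    rintro (_ | ⟨t, T⟩) ⟨hsize, hvars⟩
    · exact Or.inl rfl
    · simp only [sizeP, varsP, Finset.union_subset_iff] at hsize hvars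
      have := size_pos t
      exact Or.inr ⟨t, ⟨by omega, hvars.1⟩, T, ⟨by omega, hvars.2⟩, rfl⟩

theorem statement3 (s : RT) : {t : RT | rle t s}.Finite := by
  refine (finite_setOf_weight_le (vars s) (size s)).1.subset ?_
  rintro t ⟨a, hred, hta⟩
  obtain ⟨s', hs', hts'⟩ := hred.exists_weight_le t hta
  rw [Multiset.mem_singleton] at hs'
  exact hs' ▸ hts'

end Resource
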